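/- In the basic model, assume additionally that (B−1)·a·b + n·(a·N − 1) > 0, let E = (1/(aBN))·Σ_{k=1}^{aBN} α_k denote the mean Age-of-Information and let Ê = (B' + N' − n)/2 be its approximation. Then the relative approximation error satisfies |E − Ê| / E ≤ a·b / ( (B−1)·a·b + n·(a·N − 1) ). -/

import Mathlib

/-!
Since `gcd(A, aBN) = 1`, as `k` runs over a period the residues `j = kA mod aBN` run over
`0, …, aBN − 1`, and `α_k` depends only on `j`. Write `j = e·(Na) + t` with `e < B`, `t < Na`.
The first summand of `α` is `n·(bt mod Na)`, which sums to a Gauss sum as `gcd(b, Na) = 1`.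
For fixed `t` the second summand is `a·((c_t + b·Nn·e) mod bB)`; as `gcd(Nn, B) = 1`, its sum
over `e` is a Gauss sum plus `B·(c_t mod b)`. Hence `E = D/2 + R/N` with
`D = (B−1)ab + n(aN−1)` and `0 ≤ R ≤ Nab`, so `E ≥ D/2` and `|E − Ê| = |R/N − ab/2| ≤ ab/2`.
-/

/-- The Age-of-Information sequence of the basic model:
`α_k = (k·A' % N') + ((k·A' % B' − k·A' % N') % B')`. -/
def aoiBasic (A' B' N' : ℤ) (k : ℕ) : ℤ :=
  ((k : ℤ) * A') % N' + (((k : ℤ) * A') % B' - ((k : ℤ) * A') % N') % B'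

/-- The mean Age-of-Information of the basic model over one period. -/
def meanAoiBasic (A B N a b n : ℕ) : ℚ :=
  (1 / ((a : ℚ) * B * N)) *
    ∑ k ∈ Finset.Icc 1 (a * B * N),
      ((aoiBasic (A * b * n : ℤ) (B * a * b : ℤ) (N * a * n : ℤ) k : ℤ) : ℚ)

open Finset

lemma sum_range_affine_mod {M : Type*} [AddCommMonoid M] (f : ℕ → M) {m u : ℕ}
    (hu : Nat.Coprime u m) (d : ℕ) :
    ∑ k ∈ range m, f ((d + u * k) % m) = ∑ k ∈ range m, f k := by
  have hmaps : Set.MapsTo (fun k => (d + u * k) % m) (range m : Set ℕ) (range m) := by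
    intro k hk
    simp only [coe_range, Set.mem_Iio] at hk ⊢
    exact Nat.mod_lt _ (by omega)
  have hinj : Set.InjOn (fun k => (d + u * k) % m) (range m : Set ℕ) := by
    intro k₁ hk₁ k₂ hk₂ h
    simp only [coe_range, Set.mem_Iio] at hk₁ hk₂
    exact ((Nat.ModEq.add_left_cancel' d h).cancel_left_of_coprime hu.symm).eq_of_lt_of_lt
      hk₁ hk₂
  exact sum_nbij _ (fun k hk => hmaps hk) hinj
    ((finite_toSet _).injOn_iff_bijOn_of_mapsTo hmaps |>.mp hinj).surjOn fun _ _ => rfl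

lemma sum_Icc_one_mul_mod {M : Type*} [AddCommMonoid M] (f : ℕ → M) {m u : ℕ}
    (hu : Nat.Coprime u m) :
    ∑ k ∈ Icc 1 m, f (k * u % m) = ∑ k ∈ range m, f k := by
  rw [← Ico_add_one_right_eq_Icc, sum_Ico_eq_sum_range, Nat.add_sub_cancel,
    ← sum_range_affine_mod f hu u]
  exact sum_congr rfl fun k _ => by rw [add_comm 1 k, add_mul, one_mul, mul_comm k u, add_comm]

lemma sum_range_mul_eq_sum_sum {M : Type*} [AddCommMonoid M] (f : ℕ → M) (m r : ℕ) :
    ∑ j ∈ range (m * r), f j = ∑ e ∈ range m, ∑ t ∈ range r, f (e * r + t) := by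
  induction m with
  | zero => simp
  | succ m ih => rw [sum_range_succ, ← ih, Nat.succ_mul, sum_range_add]

lemma sum_range_natCast_mul_two {R : Type*} [CommRing R] (m : ℕ) :
    (∑ i ∈ range m, (i : R)) * 2 = m * (m - 1) := by
  induction m with
  | zero => simp
  | succ m ih => push_cast [sum_range_succ, add_mul, ih]; ring

lemma sum_range_mod_mul_add {b m u : ℕ} (hb : 0 < b) (hu : Nat.Coprime u m) (c : ℕ) :
    ∑ e ∈ range m, (c + b * (u * e)) % (b * m) = b * ∑ e ∈ range m, e + m * (c % b) := by
  have h (e : ℕ) : (c + b * (u * e)) % (b * m) = c % b + b * ((c / b + u * e) % m) := by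
    rw [Nat.mod_mul, Nat.add_mul_mod_self_left, Nat.add_mul_div_left _ _ hb]
  simp only [h, sum_add_distrib, sum_const, card_range, smul_eq_mul, ← mul_sum,
    sum_range_affine_mod (fun k => k) hu]
  ring

lemma Nat.Coprime.of_eq_gcd_mul_right {c x y : ℕ} (hc : 0 < c)
    (h : c = Nat.gcd (x * c) (y * c)) : Nat.Coprime x y := by
  rw [Nat.gcd_mul_right] at h
  exact Nat.eq_of_mul_eq_mul_right hc (by rw [one_mul]; exact h.symm)

lemma abs_sub_midpoint_div_le {K : Type*} [Field K] [LinearOrder K] [IsStrictOrderedRing K]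
    {D c E : K} (hD : 0 < D) (hE : E ∈ Set.Icc (D / 2) (D / 2 + c)) :
    |E - (D + c) / 2| / E ≤ c / D := by
  obtain ⟨hlo, hhi⟩ := hE
  have hc : 0 ≤ c := by linarith
  have habs : |E - (D + c) / 2| ≤ c / 2 := abs_le.2 ⟨by linarith, by linarith⟩
  rw [div_le_div_iff₀ (by linarith) hD]
  nlinarith [abs_nonneg (E - (D + c) / 2)]

/-- `α_k = aoiAt B' N' (k * A')`: the second summand of `α_k` is rewritten via
`(x % B' - x % N') % B' = N' * (x / N') % B'`. -/
def aoiAt (B' N' x : ℕ) : ℕ := x % N' + N' * (x / N') % B'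

lemma aoiBasic_natCast (A' B' N' k : ℕ) :
    aoiBasic A' B' N' k = aoiAt B' N' (k * A') := by
  have hsub (x B' N' : ℤ) : (x % B' - x % N') % B' = N' * (x / N') % B' := by
    rw [Int.sub_emod, Int.emod_emod, ← Int.sub_emod, Int.emod_def x N']
    ring_nf
  unfold aoiBasic aoiAt
  rw [hsub]
  push_cast
  rfl

lemma aoiAt_add_mul {B' N' : ℕ} (hN : 0 < N') (y c : ℕ) :
    aoiAt B' N' (y + N' * c) = y % N' + (N' * (y / N') + N' * c) % B' := by
  rw [aoiAt, Nat.add_mul_mod_self_left, Nat.add_mul_div_left _ _ hN, mul_add]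

lemma aoiAt_add_mul_of_dvd {B' N' : ℕ} (y c : ℕ) (h : B' ∣ N' * c) :
    aoiAt B' N' (y + N' * c) = aoiAt B' N' y := by
  rcases N'.eq_zero_or_pos with rfl | hN
  · simp
  obtain ⟨q, hq⟩ := h
  rw [aoiAt_add_mul hN, hq, Nat.add_mul_mod_self_left, aoiAt]

lemma sum_aoiAt_add_mul_range {a b m u : ℕ} (ha : 0 < a) (hb : 0 < b) (hu0 : 0 < u)
    (hu : Nat.Coprime u m) (y : ℕ) :
    ∑ e ∈ range m, aoiAt (a * (b * m)) (a * u) (y + a * u * (b * e)) =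
      m * (y % (a * u)) + a * (b * ∑ e ∈ range m, e + m * (u * (y / (a * u)) % b)) := by
  have h (e : ℕ) : aoiAt (a * (b * m)) (a * u) (y + a * u * (b * e)) =
      y % (a * u) + a * ((u * (y / (a * u)) + b * (u * e)) % (b * m)) := by
    rw [aoiAt_add_mul (by positivity), ← Nat.mul_mod_mul_left]
    ring_nf
  simp only [h, sum_add_distrib, sum_const, card_range, smul_eq_mul, ← mul_sum,
    sum_range_mod_mul_add hb hu]

section BasicModel

variable {A B N a b n : ℕ}

lemma aoiAt_mul_eq_aoiAt_mul_mod (k : ℕ) :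
    aoiAt (B * a * b) (N * a * n) (k * (A * b * n)) =
      aoiAt (B * a * b) (N * a * n) (b * n * (k * A % (a * B * N))) := by
  have h : k * (A * b * n) =
      b * n * (k * A % (a * B * N)) + N * a * n * (b * B * (k * A / (a * B * N))) := by
    rw [show k * (A * b * n) = b * n * (k * A) by ring]
    nth_rw 1 [← Nat.mod_add_div (k * A) (a * B * N)]
    ring
  rw [h, aoiAt_add_mul_of_dvd]
  exact ⟨N * n * (k * A / (a * B * N)), by ring⟩

lemma sum_aoiAt_range (ha : 0 < a) (hb : 0 < b) (hn : 0 < n) (hN : 0 < N)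
    (hbNa : Nat.Coprime b (N * a)) (hNnB : Nat.Coprime (N * n) B) :
    ∑ j ∈ range (B * (N * a)), aoiAt (B * a * b) (N * a * n) (b * n * j) =
      B * (n * ∑ t ∈ range (N * a), t +
          a * ∑ t ∈ range (N * a), N * n * (b * t / (N * a)) % b) +
        a * (N * a) * (b * ∑ e ∈ range B, e) := by
  have hsplit (e t : ℕ) : b * n * (e * (N * a) + t) = b * n * t + a * (N * n) * (b * e) := by
    ring
  have hmod (t : ℕ) : b * n * t % (a * (N * n)) = n * (b * t % (N * a)) := by
    rw [← Nat.mul_mod_mul_left]; ring_nf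
  have hdiv (t : ℕ) : b * n * t / (a * (N * n)) = b * t / (N * a) := by
    rw [show b * n * t = n * (b * t) by ring, show a * (N * n) = n * (N * a) by ring,
      Nat.mul_div_mul_left _ _ hn]
  rw [sum_range_mul_eq_sum_sum, sum_comm, show B * a * b = a * (b * B) by ring,
    show N * a * n = a * (N * n) by ring]
  simp only [hsplit, sum_aoiAt_add_mul_range ha hb (by positivity) hNnB, hmod, hdiv,
    sum_add_distrib, sum_const, card_range, smul_eq_mul, ← mul_sum]
  have hperm : ∑ t ∈ range (N * a), b * t % (N * a) = ∑ t ∈ range (N * a), t := by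
    simpa using sum_range_affine_mod (fun k => k) hbNa 0
  rw [hperm]
  ring

lemma meanAoiBasic_eq (ha : 0 < a) (hb : 0 < b) (hn : 0 < n) (hB : 0 < B) (hN : 0 < N)
    (hAaBN : Nat.Coprime A (a * B * N)) (hbNa : Nat.Coprime b (N * a))
    (hNnB : Nat.Coprime (N * n) B) :
    meanAoiBasic A B N a b n =
      (((B : ℚ) - 1) * (a * b) + n * (a * N - 1)) / 2 +
        ((∑ t ∈ range (N * a), N * n * (b * t / (N * a)) % b : ℕ) : ℚ) / N := by
  have hα (k : ℕ) : ((aoiBasic (A * b * n : ℤ) (B * a * b : ℤ) (N * a * n : ℤ) k : ℤ) : ℚ) =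
      aoiAt (B * a * b) (N * a * n) (b * n * (k * A % (a * B * N))) := by
    have h := aoiBasic_natCast (A * b * n) (B * a * b) (N * a * n) k
    push_cast at h
    rw [h, aoiAt_mul_eq_aoiAt_mul_mod]
    norm_cast
  have hGaussB := sum_range_natCast_mul_two (R := ℚ) B
  have hGaussNa := sum_range_natCast_mul_two (R := ℚ) (N * a)
  unfold meanAoiBasic
  simp only [hα]
  rw [sum_Icc_one_mul_mod (fun j => (aoiAt (B * a * b) (N * a * n) (b * n * j) : ℚ)) hAaBN,
    ← Nat.cast_sum, show a * B * N = B * (N * a) by ring,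
    sum_aoiAt_range ha hb hn hN hbNa hNnB]
  push_cast at hGaussNa ⊢
  field_simp
  linear_combination (B * n : ℚ) * hGaussNa + (a ^ 2 * N * b : ℚ) * hGaussB

lemma meanAoiBasic_mem_Icc (ha : 0 < a) (hb : 0 < b) (hn : 0 < n) (hB : 0 < B) (hN : 0 < N)
    (hAaBN : Nat.Coprime A (a * B * N)) (hbNa : Nat.Coprime b (N * a))
    (hNnB : Nat.Coprime (N * n) B) :
    meanAoiBasic A B N a b n ∈ Set.Icc ((((B : ℚ) - 1) * (a * b) + n * (a * N - 1)) / 2)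
      ((((B : ℚ) - 1) * (a * b) + n * (a * N - 1)) / 2 + a * b) := by
  rw [meanAoiBasic_eq ha hb hn hB hN hAaBN hbNa hNnB]
  have hR : ∑ t ∈ range (N * a), N * n * (b * t / (N * a)) % b ≤ N * a * b := by
    simpa using sum_le_card_nsmul (range (N * a)) _ b fun t _ => (Nat.mod_lt _ hb).le
  refine ⟨by simp only [le_add_iff_nonneg_right]; positivity, add_le_add_right ?_ _⟩
  rw [div_le_iff₀ (by positivity)]
  exact_mod_cast hR.trans_eq (by ring)

end BasicModel

theorem stmt8_general (A B N a b n : ℕ) (hB : 0 < B) (hN : 0 < N)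
    (hapos : 0 < a) (hbpos : 0 < b) (hnpos : 0 < n)
    (ha : a = Nat.gcd (B * a * b) (N * a * n))
    (hb : b = Nat.gcd (A * b * n) (B * a * b))
    (hn : n = Nat.gcd (A * b * n) (N * a * n))
    (hpos : (0 : ℚ) < ((B : ℚ) - 1) * ((a : ℚ) * b) + (n : ℚ) * ((a : ℚ) * N - 1)) :
    |meanAoiBasic A B N a b n - ((B : ℚ) * a * b + (N : ℚ) * a * n - n) / 2| /
        meanAoiBasic A B N a b n ≤
      ((a : ℚ) * b) / (((B : ℚ) - 1) * ((a : ℚ) * b) + (n : ℚ) * ((a : ℚ) * N - 1)) := by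
  rw [mul_right_comm B a b, mul_right_comm N a n] at ha
  rw [mul_right_comm A b n] at hb
  have hBbNn := Nat.Coprime.of_eq_gcd_mul_right hapos ha
  have hAnBa := Nat.Coprime.of_eq_gcd_mul_right hbpos hb
  have hAbNa := Nat.Coprime.of_eq_gcd_mul_right hnpos hn
  have hAaBN : Nat.Coprime A (a * B * N) :=
    ((hAnBa.coprime_dvd_left (dvd_mul_right A n)).mul_right
      (hAbNa.coprime_dvd_left (dvd_mul_right A b))).coprime_dvd_right ⟨a, by ring⟩
  have hmem := meanAoiBasic_mem_Icc hapos hbpos hnpos hB hN hAaBN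
    (hAbNa.coprime_dvd_left (dvd_mul_left b A)) (hBbNn.symm.coprime_dvd_right (dvd_mul_right B b))
  rw [show ((B : ℚ) * a * b + (N : ℚ) * a * n - n) / 2 =
    ((((B : ℚ) - 1) * ((a : ℚ) * b) + (n : ℚ) * ((a : ℚ) * N - 1)) + a * b) / 2 by ring]
  exact abs_sub_midpoint_div_le hpos hmem

/-- Corollary 1, eq. (13): the relative error of the approximation
`Ê = (B' + N' − n)/2` of the mean AoI `E` of the basic model is at most
`a·b / ((B−1)·a·b + n·(a·N − 1))`. -/
theorem stmt8 (A B N a b n : ℕ) (hA : 0 < A) (hB : 0 < B) (hN : 0 < N)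
    (hapos : 0 < a) (hbpos : 0 < b) (hnpos : 0 < n)
    (ha : a = Nat.gcd (B * a * b) (N * a * n))
    (hb : b = Nat.gcd (A * b * n) (B * a * b))
    (hn : n = Nat.gcd (A * b * n) (N * a * n))
    (hpos : (0 : ℚ) < ((B : ℚ) - 1) * ((a : ℚ) * b) + (n : ℚ) * ((a : ℚ) * N - 1)) :
    |meanAoiBasic A B N a b n - ((B : ℚ) * a * b + (N : ℚ) * a * n - n) / 2| /
        meanAoiBasic A B N a b n ≤
      ((a : ℚ) * b) / (((B : ℚ) - 1) * ((a : ℚ) * b) + (n : ℚ) * ((a : ℚ) * N - 1)) :=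
  stmt8_general A B N a b n hB hN hapos hbpos hnpos ha hb hn hpos
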